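/- arXiv:1310.3796 — 7 statements merged into one kernel-verified Lean document; each statement's English description precedes it below -/
import Mathlib

section
/- Every subcode of a convex combinatorial code is convex. That is, if C ⊆ 2^[n] is a convex code and σ ⊆ [n], then the restricted code C(σ) = {σ ∩ μ : μ ∈ C} ⊆ 2^σ is a convex code. -/
/-- A combinatorial code `C ⊆ 2^[n]` is convex if there are a convex set `X ⊆ ℝ^d`
and convex subsets `V i ⊆ X` such that `C` consists exactly of the subsets `σ`
whose atom `(⋂_{i∈σ} V i) ∩ ⋂_{j∉σ} (X \ V j)` is nonempty (empty intersections
being `X` by convention). -/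
def IsConvexCode {n : ℕ} (C : Set (Finset (Fin n))) : Prop :=
  ∃ (d : ℕ) (X : Set (Fin d → ℝ)) (V : Fin n → Set (Fin d → ℝ)),
    Convex ℝ X ∧ (∀ i, Convex ℝ (V i) ∧ V i ⊆ X) ∧
    ∀ σ : Finset (Fin n),
      σ ∈ C ↔ ((X ∩ ⋂ i ∈ σ, V i) ∩ ⋂ j ∈ σᶜ, (X \ V j)).Nonempty

/-! A point `x` lies in the atom of exactly one codeword, namely the set of `V i` containing it.
So the code of `(X, V)` is the image of `X` under this map, and replacing `V i` by `∅` for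
`i ∉ σ` (which keeps every set convex) intersects each codeword with `σ`. -/

namespace CombinatorialCode

variable {E ι : Type*} [Fintype ι]

open Classical in
noncomputable def codeword (V : ι → Set E) (x : E) : Finset ι :=
  {i | x ∈ V i}

@[simp]
theorem mem_codeword {V : ι → Set E} {x : E} {i : ι} : i ∈ codeword V x ↔ x ∈ V i := by
  simp [codeword]

theorem atom_nonempty_iff_exists_codeword_eq [DecidableEq ι] (X : Set E) (V : ι → Set E)
    (τ : Finset ι) :
    ((X ∩ ⋂ i ∈ τ, V i) ∩ ⋂ j ∈ τᶜ, (X \ V j)).Nonempty ↔ ∃ x ∈ X, codeword V x = τ := by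
  constructor
  · rintro ⟨x, ⟨hxX, hxV⟩, hxW⟩
    refine ⟨x, hxX, Finset.ext fun i => ⟨fun hi => ?_, fun hi => ?_⟩⟩
    · by_contra hiτ
      exact (Set.mem_iInter₂.mp hxW i (Finset.mem_compl.mpr hiτ)).2 (mem_codeword.mp hi)
    · exact mem_codeword.mpr (Set.mem_iInter₂.mp hxV i hi)
  · rintro ⟨x, hxX, rfl⟩
    refine ⟨x, ⟨hxX, Set.mem_iInter₂.mpr fun i hi => mem_codeword.mp hi⟩,
      Set.mem_iInter₂.mpr fun j hj => ⟨hxX, fun hxj => ?_⟩⟩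
    exact Finset.mem_compl.mp hj (mem_codeword.mpr hxj)

theorem codeword_restrict [DecidableEq ι] (V : ι → Set E) (σ : Finset ι) (x : E) :
    codeword (fun i => if i ∈ σ then V i else ∅) x = σ ∩ codeword V x := by
  ext i
  by_cases hi : i ∈ σ <;> simp [hi]

end CombinatorialCode

open CombinatorialCode in
/-- Every subcode (restriction) of a convex code is convex. -/
theorem subcode_of_convex_isConvex {n : ℕ} (C : Set (Finset (Fin n)))
    (hC : IsConvexCode C) (σ : Finset (Fin n)) :
    IsConvexCode {ν | ∃ μ ∈ C, ν = σ ∩ μ} := by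
  obtain ⟨d, X, V, hX, hV, hCX⟩ := hC
  refine ⟨d, X, fun i => if i ∈ σ then V i else ∅, hX, fun i => ?_, fun ν => ?_⟩
  · dsimp only
    split_ifs
    exacts [hV i, ⟨convex_empty, Set.empty_subset X⟩]
  · simp only [hCX, atom_nonempty_iff_exists_codeword_eq, codeword_restrict, Set.mem_ofPred_eq]
    constructor
    · rintro ⟨_, ⟨x, hxX, rfl⟩, rfl⟩
      exact ⟨x, hxX, rfl⟩
    · rintro ⟨x, hxX, rfl⟩
      exact ⟨_, ⟨x, hxX, rfl⟩, rfl⟩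
end

section
/- Let Δ ⊆ 2^[m] be an abstract simplicial complex with maximal faces α_1,...,α_n. Define U ∈ ℝ^{n×m} by U_{ia} = 1 if a ∈ α_i and U_{ia} = −n if a ∉ α_i, and set θ_i = 1/2 for all i. Then for every nonempty σ ⊆ [n]: the intersection ⋂_{i∈σ} H_i^+ is nonempty if and only if ⋂_{i∈σ} α_i ≠ ∅, where H_i^+ = {y ∈ ℝ^m_{≥0} : Σ_a U_{ia} y_a > 1/2}. Consequently Δ(C(U,θ)) equals the nerve N(Δ). -/
/-- The combinatorial code of a one-layer feedforward network `(U, θ)`. -/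
def ffCode {n m : ℕ} (U : Fin n → Fin m → ℝ) (θ : Fin n → ℝ) : Set (Finset (Fin n)) :=
  {σ | ∃ y : Fin m → ℝ, (∀ a, 0 ≤ y a) ∧ ∀ i, i ∈ σ ↔ θ i < ∑ a, U i a * y a}

/-- The abstract simplicial complex generated by a code. -/
def codeComplex {n : ℕ} (C : Set (Finset (Fin n))) : Set (Finset (Fin n)) :=
  {ν | ∃ σ ∈ C, ν ⊆ σ}

/-- The nerve of the collection of maximal faces `α_1, …, α_n`: a subset
`σ ⊆ [n]` is a face iff it is empty or `⋂_{i∈σ} α_i ≠ ∅`. -/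
def nerveOf {n m : ℕ} (α : Fin n → Finset (Fin m)) : Set (Finset (Fin n)) :=
  {σ | σ = ∅ ∨ ∃ a : Fin m, ∀ i ∈ σ, a ∈ α i}

/-!
If the sets `α_i`, `i ∈ σ`, have no common point, every coordinate `a` lies outside some `α_i`,
so the column sum `∑_{i∈σ} U_{ia}` is at most `-n + (|σ| - 1) < 0`. Summing the inequalities
`∑_a U_{ia} y_a > 1/2` over `i ∈ σ` and exchanging the sums then contradicts `y ≥ 0`.
Conversely a common point `a` is witnessed by the indicator vector `y = e_a`,
which lands in `H_i^+` exactly when `a ∈ α_i`.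
-/

lemma mem_codeComplex_ffCode_iff {n m : ℕ} {U : Fin n → Fin m → ℝ} {θ : Fin n → ℝ}
    {ν : Finset (Fin n)} :
    ν ∈ codeComplex (ffCode U θ) ↔
      ∃ y : Fin m → ℝ, (∀ a, 0 ≤ y a) ∧ ∀ i ∈ ν, θ i < ∑ a, U i a * y a := by
  constructor
  · rintro ⟨σ, ⟨y, hy, hσ⟩, hνσ⟩
    exact ⟨y, hy, fun i hi => (hσ i).1 (hνσ hi)⟩
  · rintro ⟨y, hy, hν⟩
    exact ⟨({i | θ i < ∑ a, U i a * y a} : Finset _), ⟨y, hy, by simp⟩,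
      fun i hi => by simpa using hν i hi⟩

section NerveWeight

variable {ι κ : Type*} [DecidableEq κ] (α : ι → Finset κ) (c : ℝ)

def nerveWeight (i : ι) (a : κ) : ℝ := if a ∈ α i then 1 else -c

variable {α c}

lemma sum_nerveWeight_nonpos {s : Finset ι} (hc : (s.card : ℝ) ≤ c + 1) {i₀ : ι} (hi₀ : i₀ ∈ s)
    {a : κ} (ha : a ∉ α i₀) : ∑ i ∈ s, nerveWeight α c i a ≤ 0 := by
  classical
  have hle_one : ∀ i ∈ s.erase i₀, nerveWeight α c i a ≤ 1 := fun i _ => by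
    unfold nerveWeight; split_ifs <;> linarith [(s.card.cast_nonneg : (0 : ℝ) ≤ s.card)]
  have hrest := Finset.sum_le_card_nsmul _ _ _ hle_one
  rw [Finset.card_erase_of_mem hi₀, nsmul_one, Nat.cast_pred (Finset.card_pos.2 ⟨i₀, hi₀⟩)]
    at hrest
  rw [← Finset.add_sum_erase s _ hi₀, nerveWeight, if_neg ha]
  linarith

variable [Fintype κ]

lemma exists_mem_forall_of_sum_nerveWeight_pos {s : Finset ι} (hs : s.Nonempty)
    (hc : (s.card : ℝ) ≤ c + 1) {y : κ → ℝ} (hy : ∀ a, 0 ≤ y a)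
    (hpos : ∀ i ∈ s, 0 < ∑ a, nerveWeight α c i a * y a) : ∃ a, ∀ i ∈ s, a ∈ α i := by
  by_contra! hmiss
  have htotal_pos : 0 < ∑ i ∈ s, ∑ a, nerveWeight α c i a * y a :=
    Finset.sum_pos hpos hs
  have htotal_nonpos : ∑ i ∈ s, ∑ a, nerveWeight α c i a * y a ≤ 0 := by
    rw [Finset.sum_comm]
    refine Finset.sum_nonpos fun a _ => ?_
    obtain ⟨i₀, hi₀, ha⟩ := hmiss a
    rw [← Finset.sum_mul]
    exact mul_nonpos_of_nonpos_of_nonneg (sum_nerveWeight_nonpos hc hi₀ ha) (hy a)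
  linarith

lemma sum_nerveWeight_mul_single (i : ι) (a : κ) :
    ∑ b, nerveWeight α c i b * (Pi.single a 1 : κ → ℝ) b = nerveWeight α c i a :=
  (dotProduct_single (nerveWeight α c i) 1 a).trans (mul_one _)

lemma exists_nonneg_forall_lt_iff {s : Finset ι} (hs : s.Nonempty) (hc : (s.card : ℝ) ≤ c + 1)
    {t : ℝ} (ht₀ : 0 ≤ t) (ht₁ : t < 1) :
    (∃ y : κ → ℝ, (∀ a, 0 ≤ y a) ∧ ∀ i ∈ s, t < ∑ a, nerveWeight α c i a * y a) ↔
      ∃ a, ∀ i ∈ s, a ∈ α i := by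
  constructor
  · rintro ⟨y, hy, hlt⟩
    exact exists_mem_forall_of_sum_nerveWeight_pos hs hc hy fun i hi => ht₀.trans_lt (hlt i hi)
  · rintro ⟨a, ha⟩
    refine ⟨Pi.single a 1, fun b => ?_, fun i hi => ?_⟩
    · by_cases hb : b = a <;> simp [hb]
    · rwa [sum_nerveWeight_mul_single, nerveWeight, if_pos (ha i hi)]

end NerveWeight

theorem construction_realizes_nerve_general {n m : ℕ}
    (α : Fin n → Finset (Fin m))
    (U : Fin n → Fin m → ℝ)
    (hU : ∀ i a, U i a = if a ∈ α i then 1 else -(n : ℝ))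
    (θ : Fin n → ℝ) (hθ : ∀ i, θ i = 1 / 2) :
    (∀ σ : Finset (Fin n), σ.Nonempty →
      ((⋂ i ∈ σ, {y : Fin m → ℝ | (∀ a, 0 ≤ y a) ∧ θ i < ∑ a, U i a * y a}).Nonempty
        ↔ ∃ a : Fin m, ∀ i ∈ σ, a ∈ α i)) ∧
    codeComplex (ffCode U θ) = nerveOf α := by
  obtain rfl : U = nerveWeight α n := funext₂ hU
  obtain rfl : θ = fun _ => 1 / 2 := funext hθ
  have hfeasible (σ : Finset (Fin n)) (hσ : σ.Nonempty) :=
    exists_nonneg_forall_lt_iff (α := α) (c := n) (t := 1 / 2) hσ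
      (by exact_mod_cast (card_finset_fin_le σ).trans n.le_succ) (by norm_num) (by norm_num)
  refine ⟨fun σ hσ => ?_, ?_⟩
  · obtain ⟨i₀, hi₀⟩ := hσ
    rw [← hfeasible σ ⟨i₀, hi₀⟩]
    simp only [Set.Nonempty, Set.mem_iInter₂, Set.mem_ofPred_eq]
    exact ⟨fun ⟨y, hy⟩ => ⟨y, (hy i₀ hi₀).1, fun i hi => (hy i hi).2⟩,
      fun ⟨y, hy, hlt⟩ => ⟨y, fun i hi => ⟨hy, hlt i hi⟩⟩⟩
  · ext ν
    rw [mem_codeComplex_ffCode_iff]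
    rcases ν.eq_empty_or_nonempty with rfl | hν
    · simpa [nerveOf] using ⟨0, fun _ => le_rfl⟩
    · simp only [nerveOf, Set.mem_ofPred_eq, hν.ne_empty, false_or]
      exact hfeasible ν hν

/-- Grünbaum-type construction: let `Δ ⊆ 2^[m]` be a simplicial complex whose
maximal faces are `α_1, …, α_n`, and let `U_{ia} = 1` if `a ∈ α_i`, `U_{ia} = -n`
otherwise, with all thresholds `θ_i = 1/2`.  Then for every nonempty `σ ⊆ [n]`,
`⋂_{i∈σ} H_i^+ ≠ ∅` iff `⋂_{i∈σ} α_i ≠ ∅`; consequently the simplicial complex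
of the code `C(U,θ)` is the nerve `N(Δ)`. -/
theorem construction_realizes_nerve {n m : ℕ}
    (Δ : Set (Finset (Fin m))) (hdown : ∀ σ ∈ Δ, ∀ τ ⊆ σ, τ ∈ Δ)
    (α : Fin n → Finset (Fin m))
    (hmax : ∀ i, α i ∈ Δ ∧ ∀ τ ∈ Δ, α i ⊆ τ → τ = α i)
    (hcover : ∀ τ ∈ Δ, ∃ i, τ ⊆ α i)
    (hne : ∀ i, (α i).Nonempty)
    (U : Fin n → Fin m → ℝ)
    (hU : ∀ i a, U i a = if a ∈ α i then 1 else -(n : ℝ))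
    (θ : Fin n → ℝ) (hθ : ∀ i, θ i = 1 / 2) :
    (∀ σ : Finset (Fin n), σ.Nonempty →
      ((⋂ i ∈ σ, {y : Fin m → ℝ | (∀ a, 0 ≤ y a) ∧ θ i < ∑ a, U i a * y a}).Nonempty
        ↔ ∃ a : Fin m, ∀ i ∈ σ, a ∈ α i)) ∧
    codeComplex (ffCode U θ) = nerveOf α :=
  construction_realizes_nerve_general α U hU θ hθ
end

section
/- (Backward direction of the construction.) Let α_1,...,α_n ⊆ [m] and define H_i^+ = {y ∈ ℝ^m_{≥0} : Σ_{a∈α_i} y_a − n·Σ_{a∉α_i} y_a > 1/2}. If τ ⊆ [n] satisfies ⋂_{i∈τ} α_i = ∅, then ⋂_{i∈τ} H_i^+ = ∅. -/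
/-!
With `S = ∑ₐ y a` and `Tᵢ = ∑_{a ∉ αᵢ} y a`, membership in `Hᵢ⁺` reads `1/2 < S - (n + 1) Tᵢ`.
Since every `a` lies outside some `αᵢ` with `i ∈ τ`, `S ≤ ∑_{i ∈ τ} Tᵢ`; summing over `τ` gives
`|τ|/2 < |τ| S - (n + 1) S ≤ -S ≤ 0`, because `|τ| ≤ n`.
-/

open Finset

theorem Finset.sum_le_sum_sum_of_forall_exists_mem {ι β R : Type*} [Fintype β]
    [AddCommMonoid R] [PartialOrder R] [IsOrderedAddMonoid R]
    {y : β → R} (hy : ∀ a, 0 ≤ y a) {τ : Finset ι} {s : ι → Finset β}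
    (hcover : ∀ a, ∃ i ∈ τ, a ∈ s i) :
    ∑ a, y a ≤ ∑ i ∈ τ, ∑ a ∈ s i, y a := by
  classical
  calc ∑ a, y a ≤ ∑ a, ∑ i ∈ τ with a ∈ s i, y a := by
        gcongr with a
        obtain ⟨i, hi, ha⟩ := hcover a
        exact single_le_sum (fun _ _ => hy a) (mem_filter.2 ⟨hi, ha⟩)
    _ = ∑ i ∈ τ, ∑ a ∈ s i, y a :=
        sum_comm' fun a i => by simp only [mem_univ, mem_filter, true_and, and_comm]

/-- Backward direction of the construction: if `⋂_{i∈τ} α_i = ∅` then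
`⋂_{i∈τ} H_i^+ = ∅`, where
`H_i^+ = {y ∈ ℝ^m_{≥0} : ∑_{a∈α_i} y_a - n ∑_{a∉α_i} y_a > 1/2}`. -/
theorem Hplus_inter_empty {n m : ℕ} (hm : 0 < m) (α : Fin n → Finset (Fin m))
    (τ : Finset (Fin n))
    (hcap : ∀ a : Fin m, ∃ i ∈ τ, a ∉ α i) :
    (⋂ i ∈ τ, {y : Fin m → ℝ |
        (∀ a, 0 ≤ y a) ∧
        (1 : ℝ) / 2 < (∑ a ∈ α i, y a) - (n : ℝ) * ∑ a ∈ (α i)ᶜ, y a}) = ∅ := by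
  refine Set.eq_empty_of_forall_notMem fun y hy => ?_
  simp only [Set.mem_iInter, Set.mem_ofPred_eq] at hy
  obtain ⟨i₀, hi₀, -⟩ := hcap ⟨0, hm⟩
  have hy₀ := (hy i₀ hi₀).1
  set S := ∑ a, y a
  have hS : 0 ≤ S := sum_nonneg fun a _ => hy₀ a
  have hH : ∀ i ∈ τ, 1 / 2 < S - (n + 1) * ∑ a ∈ (α i)ᶜ, y a := fun i hi => by
    linarith [sum_add_sum_compl (α i) y, (hy i hi).2]
  have hcover : S ≤ ∑ i ∈ τ, ∑ a ∈ (α i)ᶜ, y a :=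
    sum_le_sum_sum_of_forall_exists_mem hy₀ (by simpa only [mem_compl] using hcap)
  have hcard : (#τ : ℝ) ≤ n := by exact_mod_cast (card_le_univ τ).trans_eq (Fintype.card_fin n)
  have hpos : (0 : ℝ) < #τ := by exact_mod_cast card_pos.2 ⟨i₀, hi₀⟩
  have hsum := sum_lt_sum_of_nonempty ⟨i₀, hi₀⟩ hH
  rw [sum_const, sum_sub_distrib, sum_const, ← mul_sum, nsmul_eq_mul, nsmul_eq_mul] at hsum
  have : (#τ : ℝ) * (1 / 2) ≤ 0 := calc
    _ ≤ #τ * S - (n + 1) * ∑ i ∈ τ, ∑ a ∈ (α i)ᶜ, y a := hsum.le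
    _ ≤ n * S - (n + 1) * S := by gcongr
    _ ≤ 0 := by linarith
  linarith
end

section
/- (No-go theorem.) For every antichain M ⊆ 2^[n] of nonempty subsets of [n], there exist m ∈ ℕ, a matrix U ∈ ℝ^{n×m}, and thresholds θ ∈ ℝ^n_{>0} such that the maximal codewords of the one-layer feedforward code C(U,θ) are exactly M: max(C(U,θ)) = M. -/
/-- The maximal codewords of a code. -/
def maxCode {n : ℕ} (C : Set (Finset (Fin n))) : Set (Finset (Fin n)) :=
  {σ ∈ C | ∀ σ' ∈ C, σ ⊆ σ' → σ' = σ}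

lemma maxCode_eq_of_subset_of_forall_exists_superset {n : ℕ} {C M : Set (Finset (Fin n))}
    (hanti : ∀ σ ∈ M, ∀ τ ∈ M, σ ⊆ τ → σ = τ) (hMC : M ⊆ C)
    (hcover : ∀ σ ∈ C, ∃ τ ∈ M, σ ⊆ τ) :
    maxCode C = M := by
  ext σ
  constructor
  · rintro ⟨hσC, hmax⟩
    obtain ⟨τ, hτM, hστ⟩ := hcover σ hσC
    exact hmax τ (hMC hτM) hστ ▸ hτM
  · intro hσM
    refine ⟨hMC hσM, fun σ' hσ' hσσ' => ?_⟩
    obtain ⟨τ, hτM, hσ'τ⟩ := hcover σ' hσ'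
    obtain rfl := hanti σ hσM τ hτM (hσσ'.trans hσ'τ)
    exact hσ'τ.antisymm hσσ'

lemma not_mem_ffCode_of_sum_nonpos {n m : ℕ} {U : Fin n → Fin m → ℝ} {θ : Fin n → ℝ}
    {σ : Finset (Fin n)} (hσ : σ.Nonempty) (hθ : ∀ i ∈ σ, 0 ≤ θ i)
    (hU : ∀ a, ∑ i ∈ σ, U i a ≤ 0) :
    σ ∉ ffCode U θ := by
  rintro ⟨y, hy, hfire⟩
  have hθ_lt : ∑ i ∈ σ, θ i < ∑ i ∈ σ, ∑ a, U i a * y a :=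
    Finset.sum_lt_sum_of_nonempty hσ fun i hi => (hfire i).1 hi
  have hdrive : ∑ i ∈ σ, ∑ a, U i a * y a ≤ 0 := by
    rw [Finset.sum_comm]
    simp_rw [← Finset.sum_mul]
    exact Finset.sum_nonpos fun a _ => mul_nonpos_of_nonpos_of_nonneg (hU a) (hy a)
  linarith [Finset.sum_nonneg hθ]

def membershipWeights {n m : ℕ} (τ : Fin m → Finset (Fin n)) : Fin n → Fin m → ℝ :=
  fun i a => if i ∈ τ a then 1 else -(n : ℝ)

section membershipWeights

variable {n m : ℕ} (τ : Fin m → Finset (Fin n))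

lemma mem_ffCode_membershipWeights (a : Fin m) :
    τ a ∈ ffCode (membershipWeights τ) 1 := by
  refine ⟨Pi.single a 2, fun b => ?_, fun i => ?_⟩
  · by_cases hb : b = a <;> simp [hb]
  · have hn : (0 : ℝ) ≤ n := n.cast_nonneg
    by_cases hi : i ∈ τ a <;> simp [membershipWeights, Pi.single_apply, hi]
    linarith

lemma sum_membershipWeights_nonpos {σ : Finset (Fin n)} {a : Fin m} (hσ : ¬σ ⊆ τ a) :
    ∑ i ∈ σ, membershipWeights τ i a ≤ 0 := by
  obtain ⟨j, hjσ, hjτ⟩ := Finset.not_subset.mp hσ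
  have hrest : ∑ i ∈ σ.erase j, membershipWeights τ i a ≤ n :=
    calc ∑ i ∈ σ.erase j, membershipWeights τ i a
        ≤ ∑ _i ∈ σ.erase j, (1 : ℝ) :=
          Finset.sum_le_sum fun i _ => by
            unfold membershipWeights; split_ifs <;> linarith [(n.cast_nonneg : (0 : ℝ) ≤ n)]
      _ ≤ n := by
          simpa using (Finset.card_le_univ (σ.erase j)).trans_eq (Fintype.card_fin n)
  rw [← Finset.add_sum_erase σ _ hjσ]
  simp only [membershipWeights, hjτ, if_false] at hrest ⊢
  linarith

lemma exists_subset_of_mem_ffCode_membershipWeights {σ : Finset (Fin n)}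
    (hσ : σ ∈ ffCode (membershipWeights τ) 1) (hσne : σ.Nonempty) :
    ∃ a, σ ⊆ τ a := by
  by_contra! h
  exact not_mem_ffCode_of_sum_nonpos hσne (fun _ _ => zero_le_one)
    (fun a => sum_membershipWeights_nonpos τ (h a)) hσ

end membershipWeights

theorem no_go_general {n : ℕ} (M : Set (Finset (Fin n))) (hM : M.Nonempty)
    (hanti : ∀ σ ∈ M, ∀ τ ∈ M, σ ⊆ τ → σ = τ) :
    ∃ (m : ℕ) (U : Fin n → Fin m → ℝ) (θ : Fin n → ℝ),
      (∀ i, 0 < θ i) ∧ maxCode (ffCode U θ) = M := by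
  obtain ⟨m, τ, -, hτM⟩ := M.toFinite.fin_param
  refine ⟨m, membershipWeights τ, 1, fun _ => one_pos, ?_⟩
  refine maxCode_eq_of_subset_of_forall_exists_superset hanti ?_ fun σ hσ => ?_
  · rw [← hτM]
    rintro _ ⟨a, rfl⟩
    exact mem_ffCode_membershipWeights τ a
  · rcases σ.eq_empty_or_nonempty with rfl | hσne
    · obtain ⟨τ₀, hτ₀⟩ := hM
      exact ⟨τ₀, hτ₀, Finset.empty_subset τ₀⟩
    · obtain ⟨a, hσa⟩ := exists_subset_of_mem_ffCode_membershipWeights τ hσ hσne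
      exact ⟨τ a, hτM ▸ Set.mem_range_self a, hσa⟩

/-- No-go theorem: every nonempty antichain `M` of nonempty subsets of `[n]` arises
as the set of maximal codewords of the code of some one-layer feedforward network
with positive thresholds. -/
theorem no_go {n : ℕ} (M : Set (Finset (Fin n))) (hM : M.Nonempty)
    (hne : ∀ σ ∈ M, σ.Nonempty)
    (hanti : ∀ σ ∈ M, ∀ τ ∈ M, σ ⊆ τ → σ = τ) :
    ∃ (m : ℕ) (U : Fin n → Fin m → ℝ) (θ : Fin n → ℝ),
      (∀ i, 0 < θ i) ∧ maxCode (ffCode U θ) = M :=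
  no_go_general M hM hanti
end

section
/- (Dale's law proposition.) Suppose U ∈ ℝ^{n×m} is such that every column of U is either entrywise nonnegative or entrywise nonpositive, and θ ∈ ℝ^n. Then the feedforward code C(U,θ) has exactly one maximal codeword, namely σ_max = {i : θ_i < 0} ∪ {i : ∃ j with U_{ij} > 0}. That is, σ_max ∈ C(U,θ) and every codeword of C(U,θ) is a subset of σ_max. -/
open Filter Finset

theorem exists_pos_of_sum_mul_pos {κ : Type*} [Fintype κ] {u y : κ → ℝ} (hy : ∀ a, 0 ≤ y a)
    (h : 0 < ∑ a, u a * y a) : ∃ a, 0 < u a := by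
  by_contra! hu
  exact h.not_ge (sum_nonpos fun a _ => mul_nonpos_of_nonpos_of_nonneg (hu a) (hy a))

theorem eventually_lt_mul_iff {a s : ℝ} (hs : 0 ≤ s) :
    ∀ᶠ t in atTop, a < t * s ↔ a < 0 ∨ 0 < s := by
  rcases hs.eq_or_lt with rfl | hpos
  · simp
  · filter_upwards [(tendsto_id.atTop_mul_const hpos).eventually_gt_atTop a] with t ht
    exact iff_of_true ht (.inr hpos)

theorem exists_nonneg_forall_lt_mul_iff {ι : Type*} [Finite ι] (θ s : ι → ℝ)
    (hs : ∀ i, 0 ≤ s i) : ∃ t, 0 ≤ t ∧ ∀ i, θ i < t * s i ↔ θ i < 0 ∨ 0 < s i :=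
  ((eventually_ge_atTop 0).and (eventually_all.2 fun i => eventually_lt_mul_iff (hs i))).exists

section excitatoryInput

variable {ι κ : Type*} (U : ι → κ → ℝ)

noncomputable def excitatoryInput : κ → ℝ :=
  {a | ∀ i, 0 ≤ U i a}.indicator 1

theorem excitatoryInput_nonneg (a : κ) : 0 ≤ excitatoryInput U a :=
  Set.indicator_nonneg (fun _ _ => zero_le_one) a

theorem mul_excitatoryInput_nonneg (i : ι) (a : κ) : 0 ≤ U i a * excitatoryInput U a := by
  by_cases h : ∀ i, 0 ≤ U i a <;> simp [excitatoryInput, h]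

theorem sum_mul_excitatoryInput_pos_iff [Fintype κ]
    (hDale : ∀ j, (∀ i, 0 ≤ U i j) ∨ (∀ i, U i j ≤ 0)) (i : ι) :
    0 < ∑ a, U i a * excitatoryInput U a ↔ ∃ j, 0 < U i j := by
  refine ⟨exists_pos_of_sum_mul_pos (excitatoryInput_nonneg U), fun ⟨j, hj⟩ => ?_⟩
  have hcol : ∀ i, 0 ≤ U i j := (hDale j).resolve_right fun h => (h i).not_gt hj
  calc 0 < U i j := hj
    _ = U i j * excitatoryInput U j := by simp [excitatoryInput, hcol]
    _ ≤ ∑ a, U i a * excitatoryInput U a :=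
      single_le_sum (fun a _ => mul_excitatoryInput_nonneg U i a) (mem_univ j)

end excitatoryInput

theorem lt_zero_or_exists_pos_of_mem_ffCode {n m : ℕ} {U : Fin n → Fin m → ℝ} {θ : Fin n → ℝ}
    {σ : Finset (Fin n)} (hσ : σ ∈ ffCode U θ) {i : Fin n} (hi : i ∈ σ) :
    θ i < 0 ∨ ∃ j, 0 < U i j := by
  obtain ⟨y, hy, hσy⟩ := hσ
  rcases lt_or_ge (θ i) 0 with hθ | hθ
  · exact .inl hθ
  · exact .inr (exists_pos_of_sum_mul_pos hy (hθ.trans_lt ((hσy i).1 hi)))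

/-- If `U` respects Dale's law (every column entrywise nonnegative or entrywise
nonpositive), then the code `C(U,θ)` has exactly one maximal codeword, namely
`σ_max = {i : θ_i < 0} ∪ {i : ∃ j, U_{ij} > 0}`: the codeword `σ_max` is
realized, and every codeword is contained in it. -/
theorem dale_unique_maximal_codeword {n m : ℕ} (U : Fin n → Fin m → ℝ)
    (θ : Fin n → ℝ)
    (hDale : ∀ j, (∀ i, 0 ≤ U i j) ∨ (∀ i, U i j ≤ 0)) :
    ∃ σmax ∈ ffCode U θ,
      (∀ i, i ∈ σmax ↔ (θ i < 0 ∨ ∃ j, 0 < U i j)) ∧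
      ∀ σ ∈ ffCode U θ, σ ⊆ σmax := by
  obtain ⟨t, ht, hθt⟩ := exists_nonneg_forall_lt_mul_iff θ
    (fun i => ∑ a, U i a * excitatoryInput U a)
    fun i => sum_nonneg fun a _ => mul_excitatoryInput_nonneg U i a
  refine ⟨univ.filter fun i => θ i < 0 ∨ ∃ j, 0 < U i j,
    ⟨t • excitatoryInput U, fun a => smul_nonneg ht (excitatoryInput_nonneg U a), fun i => ?_⟩,
    fun i => by simp, fun σ hσ i hi => ?_⟩
  · simp only [mem_filter, mem_univ, true_and, Pi.smul_apply, smul_eq_mul, mul_left_comm _ t,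
      ← mul_sum, hθt, sum_mul_excitatoryInput_pos_iff U hDale]
  · simpa using lt_zero_or_exists_pos_of_mem_ffCode hσ hi
end

section
/- (Topological corollary.) For every finite abstract simplicial complex Δ there exist m ∈ ℕ and a closed convex polyhedron P ⊆ ℝ^m_{≥0} (an intersection of finitely many closed half-spaces with the nonnegative orthant) such that ℝ^m_{≥0} \ P is homotopy equivalent to the geometric realization of Δ. -/
/-!
Index coordinates by the subsets of the vertex set and let `U` be the clique-weight matrix of the
relation "comparable nonempty faces of `Δ`". Off the polyhedron `{y ≥ 0 | U y ≤ 0}` the positive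
part of `U y` is supported on a chain of faces, because two incomparable active rows inhibit each
other, and it fixes every nonnegative vector supported on such a chain. Straight-line homotopies
therefore retract the complement onto the cone of chain-supported vectors, which is the cone over
the barycentric subdivision of `Δ` without its apex. That cone is homotopy equivalent to `|Δ|`:
send a chain-supported vector to the weighted average of the barycenters of its faces, and a point
`x ∈ |Δ|` to the vector recording by how much each vertex set is a strict superlevel set of `x`;
both composites are joined to the identity by segments.
-/

open scoped ContinuousMap

def stdVert (n : ℕ) (i : Fin n) : Fin n → ℝ := fun j => if j = i then 1 else 0

def geomReal {n : ℕ} (Δ : Set (Finset (Fin n))) : Set (Fin n → ℝ) :=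
  ⋃ σ ∈ Δ, ⋃ (_ : σ.Nonempty), convexHull ℝ (stdVert n '' ↑σ)

open scoped Function

namespace ContinuousMap

variable {X E F : Type*} [TopologicalSpace X]
  [AddCommGroup E] [TopologicalSpace E] [IsTopologicalAddGroup E] [Module ℝ E] [ContinuousSMul ℝ E]
  [AddCommGroup F] [TopologicalSpace F] [IsTopologicalAddGroup F] [Module ℝ F] [ContinuousSMul ℝ F]

theorem Homotopic.of_segment_subset {s : Set E} {f g : C(X, s)}
    (h : ∀ x, segment ℝ (f x : E) (g x) ⊆ s) : f.Homotopic g := by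
  let H := Homotopy.affine ((ContinuousMap.restrict s (.id E)).comp f)
    ((ContinuousMap.restrict s (.id E)).comp g)
  exact ⟨{ toFun := fun p => ⟨H p, h p.2 (lineMap_mem_segment ℝ _ _ p.1.2)⟩
           continuous_toFun := H.continuous.subtype_mk _
           map_zero_left := fun x => Subtype.ext (H.apply_zero x)
           map_one_left := fun x => Subtype.ext (H.apply_one x) }⟩

theorem nonempty_homotopyEquiv_of_segment_subset {s : Set E} {t : Set F} (f : C(s, t))
    (g : C(t, s)) (hs : ∀ x : s, segment ℝ (g (f x) : E) x ⊆ s)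
    (ht : ∀ y : t, segment ℝ (f (g y) : F) y ⊆ t) : Nonempty (s ≃ₕ t) :=
  ⟨⟨f, g, .of_segment_subset hs, .of_segment_subset ht⟩⟩

end ContinuousMap

section ChainCone

variable {ι : Type*} (R : ι → ι → Prop)

/-- For `R = faceChainRel Δ` this is the cone over the barycentric subdivision of `Δ`, without
its apex. -/
def chainCone : Set (ι → ℝ) :=
  {z | 0 ≤ z ∧ (∃ a, 0 < z a) ∧ ∀ a b, 0 < z a → 0 < z b → R a b}

variable {R}

theorem sum_pos_of_mem_chainCone [Fintype ι] {z : ι → ℝ} (hz : z ∈ chainCone R) :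
    0 < ∑ a, z a :=
  let ⟨a, ha⟩ := hz.2.1
  Finset.sum_pos' (fun b _ => hz.1 b) ⟨a, Finset.mem_univ a, ha⟩

theorem segment_subset_chainCone [Std.Symm R] {u v : ι → ℝ} (hu : u ∈ chainCone R)
    (hv : v ∈ chainCone R) (huv : ∀ a b, 0 < u a → 0 < v b → R a b) :
    segment ℝ u v ⊆ chainCone R := by
  rintro w ⟨s, t, hs, ht, hst, rfl⟩
  have pos_of_pos {a : ι} (ha : 0 < (s • u + t • v) a) : 0 < u a ∨ 0 < v a := by
    by_contra! h
    have : (s • u + t • v) a ≤ 0 := by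
      simp only [Pi.add_apply, Pi.smul_apply, smul_eq_mul]
      nlinarith [mul_nonneg hs (sub_nonneg.mpr h.1), mul_nonneg ht (sub_nonneg.mpr h.2)]
    exact this.not_gt ha
  have rel {a b : ι} (ha : 0 < u a ∨ 0 < v a) (hb : 0 < u b ∨ 0 < v b) : R a b := by
    rcases ha with ha | ha <;> rcases hb with hb | hb
    exacts [hu.2.2 a b ha hb, huv a b ha hb, Std.Symm.symm _ _ (huv b a hb ha), hv.2.2 a b ha hb]
  refine ⟨add_nonneg (smul_nonneg hs hu.1) (smul_nonneg ht hv.1), ?_,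
    fun a b ha hb => rel (pos_of_pos ha) (pos_of_pos hb)⟩
  obtain ⟨a, ha⟩ := hu.2.1
  obtain ⟨b, hb⟩ := hv.2.1
  rcases hs.lt_or_eq with hs | rfl
  · refine ⟨a, ?_⟩
    simp only [Pi.add_apply, Pi.smul_apply, smul_eq_mul]
    nlinarith [mul_nonneg ht (hv.1 a)]
  · refine ⟨b, ?_⟩
    simp [show t = 1 by linarith, hb]

def chainCone.homeomorphOnFun {κ : Type*} (e : ι ≃ κ) (R : κ → κ → Prop) :
    chainCone (R on e) ≃ₜ chainCone R :=
  ((Homeomorph.piCongrLeft (Y := fun _ => ℝ) e).symm.subtype fun w => by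
    simp only [chainCone, Set.mem_ofPred_eq, Pi.le_def, Pi.zero_apply, Function.onFun,
      Homeomorph.piCongrLeft_symm_apply]
    exact and_congr e.forall_congr_right.symm (and_congr e.exists_congr_right.symm
      (e.forall_congr_right.symm.trans (forall_congr' fun _ => e.forall_congr_right.symm)))).symm

end ChainCone

open Matrix

section CliqueWeight

open Classical

variable {ι : Type*} [Fintype ι] (R : ι → ι → Prop)

/-- A network with thresholds `0` whose active units always form an `R`-clique
(`rel_of_cliqueWeight_mulVec_pos`). -/
noncomputable def cliqueWeight : Matrix ι ι ℝ :=
  Matrix.of fun a b => if R a a then (if b = a then 1 else if R a b then 0 else -1) else 0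

variable {R}

theorem cliqueWeight_mulVec_apply (z : ι → ℝ) (a : ι) :
    (cliqueWeight R *ᵥ z) a = if R a a then z a - ∑ b with ¬ R a b, z b else 0 := by
  split_ifs with ha
  · have hrow (b : ι) : cliqueWeight R a b * z b =
        (if b = a then z b else 0) - if ¬ R a b then z b else 0 := by
      by_cases hb : b = a
      · subst hb; simp [cliqueWeight, ha]
      · by_cases hab : R a b <;> simp [cliqueWeight, ha, hb, hab]
    simp only [mulVec, dotProduct, hrow, Finset.sum_sub_distrib, Finset.sum_ite_eq',
      Finset.mem_univ, if_true, Finset.sum_filter]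
  · simp [mulVec, dotProduct, cliqueWeight, ha]

theorem cliqueWeight_mulVec_le {z : ι → ℝ} (hz : 0 ≤ z) : cliqueWeight R *ᵥ z ≤ z := by
  intro a
  rw [cliqueWeight_mulVec_apply]
  split_ifs
  · exact sub_le_self _ (Finset.sum_nonneg fun b _ => hz b)
  · exact hz a

theorem cliqueWeight_mulVec_apply_of_pos {z : ι → ℝ} (hz : z ∈ chainCone R) {a : ι}
    (ha : 0 < z a) : (cliqueWeight R *ᵥ z) a = z a := by
  have hzero : ∀ b ∈ ({b | ¬ R a b} : Finset ι), z b = 0 := fun b hb =>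
    le_antisymm (not_lt.mp fun hzb => (Finset.mem_filter.mp hb).2 (hz.2.2 a b ha hzb)) (hz.1 b)
  rw [cliqueWeight_mulVec_apply, if_pos (hz.2.2 a a ha ha), Finset.sum_eq_zero hzero, sub_zero]

theorem rel_of_cliqueWeight_mulVec_pos [Std.Symm R] {z : ι → ℝ} (hz : 0 ≤ z) {a b : ι}
    (ha : 0 < (cliqueWeight R *ᵥ z) a) (hb : 0 < (cliqueWeight R *ᵥ z) b) : R a b := by
  have row_le {c d : ι} (hc : 0 < (cliqueWeight R *ᵥ z) c) (hcd : ¬ R c d) :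
      (cliqueWeight R *ᵥ z) c ≤ z c - z d := by
    rw [cliqueWeight_mulVec_apply] at hc ⊢
    split_ifs at hc ⊢ with hcc
    · exact sub_le_sub_left (Finset.single_le_sum (fun b _ => hz b) (by simpa using hcd)) _
    · exact (lt_irrefl _ hc).elim
  by_contra hab
  linarith [row_le ha hab, row_le hb fun h => hab (Std.Symm.symm _ _ h)]

theorem cliqueWeight_mulVec_sup_zero_eq_self {z : ι → ℝ} (hz : z ∈ chainCone R) :
    cliqueWeight R *ᵥ z ⊔ 0 = z := by
  funext a
  have hza : (0 : ℝ) ≤ z a := hz.1 a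
  rcases hza.lt_or_eq with ha | ha
  · simp [cliqueWeight_mulVec_apply_of_pos hz ha, ha.le]
  · simp [← ha, (cliqueWeight_mulVec_le hz.1 a).trans_eq ha.symm]

def orthantDiffPolyhedron {κ : Type*} (W : Matrix κ ι ℝ) : Set (ι → ℝ) :=
  {y | 0 ≤ y} \ {y | 0 ≤ y ∧ W *ᵥ y ≤ 0}

theorem mem_orthantDiffPolyhedron_iff {κ : Type*} {W : Matrix κ ι ℝ} {y : ι → ℝ} :
    y ∈ orthantDiffPolyhedron W ↔ 0 ≤ y ∧ ∃ l, 0 < (W *ᵥ y) l := by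
  simp only [orthantDiffPolyhedron, Set.mem_sdiff, Set.mem_ofPred_eq, Pi.le_def, not_and,
    not_forall, not_le]
  exact and_congr_right fun hy => ⟨fun h => h hy, fun h _ => h⟩

theorem cliqueWeight_mulVec_sup_zero_mem_chainCone [Std.Symm R] {y : ι → ℝ}
    (hy : y ∈ orthantDiffPolyhedron (cliqueWeight R)) : cliqueWeight R *ᵥ y ⊔ 0 ∈ chainCone R := by
  obtain ⟨hy0, a, ha⟩ := mem_orthantDiffPolyhedron_iff.mp hy
  have pos_of_pos {b : ι} (hb : 0 < (cliqueWeight R *ᵥ y ⊔ 0) b) : 0 < (cliqueWeight R *ᵥ y) b :=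
    (lt_sup_iff.mp hb).resolve_right (lt_irrefl 0)
  exact ⟨le_sup_right, ⟨a, lt_sup_of_lt_left ha⟩, fun b c hb hc =>
    rel_of_cliqueWeight_mulVec_pos hy0 (pos_of_pos hb) (pos_of_pos hc)⟩

theorem chainCone_subset_orthantDiffPolyhedron :
    chainCone R ⊆ orthantDiffPolyhedron (cliqueWeight R) := by
  rintro z hz
  obtain ⟨a, ha⟩ := hz.2.1
  exact mem_orthantDiffPolyhedron_iff.mpr
    ⟨hz.1, a, (cliqueWeight_mulVec_apply_of_pos hz ha).symm ▸ ha⟩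

theorem segment_cliqueWeight_mulVec_sup_zero_subset [Std.Symm R] {y : ι → ℝ}
    (hy : y ∈ orthantDiffPolyhedron (cliqueWeight R)) :
    segment ℝ (cliqueWeight R *ᵥ y ⊔ 0) y ⊆ orthantDiffPolyhedron (cliqueWeight R) := by
  obtain ⟨hy0, a, ha⟩ := mem_orthantDiffPolyhedron_iff.mp hy
  set C := {v : ι → ℝ | 0 ≤ v ∧ 0 < (cliqueWeight R *ᵥ v) a}
  have hC : Convex ℝ C := (convex_Ici 0).inter <| convex_halfSpace_gt
    ((LinearMap.proj a).comp (cliqueWeight R).mulVecLin).isLinear 0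
  have hry : cliqueWeight R *ᵥ y ⊔ 0 ∈ C := by
    have hr := cliqueWeight_mulVec_sup_zero_mem_chainCone hy
    have hra : 0 < (cliqueWeight R *ᵥ y ⊔ 0) a := lt_sup_of_lt_left ha
    exact ⟨hr.1, (cliqueWeight_mulVec_apply_of_pos hr hra).symm ▸ hra⟩
  exact (hC.segment_subset hry ⟨hy0, ha⟩).trans
    fun v hv => mem_orthantDiffPolyhedron_iff.mpr ⟨hv.1, a, hv.2⟩

theorem nonempty_orthantDiffPolyhedron_homotopyEquiv_chainCone [Std.Symm R] :
    Nonempty (orthantDiffPolyhedron (cliqueWeight R) ≃ₕ chainCone R) := by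
  let retraction : C(orthantDiffPolyhedron (cliqueWeight R), chainCone R) :=
    ⟨fun y => ⟨_, cliqueWeight_mulVec_sup_zero_mem_chainCone y.2⟩,
      (continuous_pi fun a => ((continuous_apply a).comp
        (continuous_const.matrix_mulVec continuous_subtype_val)).max continuous_const).subtype_mk _⟩
  let inclusion : C(chainCone R, orthantDiffPolyhedron (cliqueWeight R)) :=
    ⟨Set.inclusion chainCone_subset_orthantDiffPolyhedron, by fun_prop⟩
  refine ContinuousMap.nonempty_homotopyEquiv_of_segment_subset retraction inclusion
    (fun y => segment_cliqueWeight_mulVec_sup_zero_subset y.2) fun z => ?_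
  simp [retraction, inclusion, cliqueWeight_mulVec_sup_zero_eq_self z.2]

end CliqueWeight

section LevelGap

variable {V : Type*} [Fintype V] [DecidableEq V]

/-- Positive exactly when `τ` is a nonempty strict superlevel set `{i | θ < x i}` of `x` at some
level `θ ≥ 0` (`levelGap_pos_iff`). -/
noncomputable def levelGap (τ : Finset V) (x : V → ℝ) : ℝ :=
  if hτ : τ.Nonempty then
    max (τ.inf' hτ x - if hc : τᶜ.Nonempty then max (τᶜ.sup' hc x) 0 else 0) 0
  else 0

theorem levelGap_nonneg (τ : Finset V) (x : V → ℝ) : 0 ≤ levelGap τ x := by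
  by_cases hτ : τ.Nonempty
  · rw [levelGap, dif_pos hτ]
    exact le_max_right _ _
  · rw [levelGap, dif_neg hτ]

theorem levelGap_pos_iff {τ : Finset V} {x : V → ℝ} :
    0 < levelGap τ x ↔ τ.Nonempty ∧ ∀ i ∈ τ, 0 < x i ∧ ∀ j ∉ τ, x j < x i := by
  have threshold_lt {c : ℝ} : (if hc : τᶜ.Nonempty then max (τᶜ.sup' hc x) 0 else 0) < c ↔
      0 < c ∧ ∀ j ∉ τ, x j < c := by
    split_ifs with hc
    · simp only [max_lt_iff, Finset.sup'_lt_iff, Finset.mem_compl, and_comm]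
    · simp only [Finset.not_nonempty_iff_eq_empty, Finset.compl_eq_empty_iff] at hc
      simp [hc]
  by_cases hτ : τ.Nonempty
  · rw [levelGap, dif_pos hτ]
    simp only [lt_max_iff, lt_irrefl, or_false, sub_pos, Finset.lt_inf'_iff, hτ, true_and]
    simp only [threshold_lt]
  · simp [levelGap, hτ]

theorem continuous_levelGap (τ : Finset V) : Continuous (levelGap τ) := by
  unfold levelGap
  split_ifs <;> fun_prop

end LevelGap

section Barycenter

variable {V : Type*} [DecidableEq V]

noncomputable def barycenter (σ : Finset V) : V → ℝ :=
  fun i => if i ∈ σ then (σ.card : ℝ)⁻¹ else 0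

theorem barycenter_nonneg (σ : Finset V) : 0 ≤ barycenter σ := by
  intro i
  unfold barycenter
  split_ifs <;> positivity

variable [Fintype V]

theorem sum_barycenter {σ : Finset V} (hσ : σ.Nonempty) : ∑ i, barycenter σ i = 1 := by
  simp [barycenter, Finset.sum_ite_mem, hσ.card_pos.ne']

noncomputable def weightedBarycenter (z : Finset V → ℝ) : V → ℝ :=
  Finset.univ.centerMass z barycenter

theorem weightedBarycenter_apply (z : Finset V → ℝ) (i : V) :
    weightedBarycenter z i = (∑ σ, z σ)⁻¹ * ∑ σ, z σ * barycenter σ i := by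
  simp [weightedBarycenter, Finset.centerMass, Finset.sum_apply]

theorem weightedBarycenter_nonneg {z : Finset V → ℝ} (hz : 0 ≤ z) : 0 ≤ weightedBarycenter z :=
  fun i => by
    rw [Pi.zero_apply, weightedBarycenter_apply]
    exact mul_nonneg (inv_nonneg.mpr (Finset.sum_nonneg fun σ _ => hz σ))
      (Finset.sum_nonneg fun σ _ => mul_nonneg (hz σ) (barycenter_nonneg σ i))

theorem sum_weightedBarycenter {z : Finset V → ℝ} (hz : 0 ≤ z) (hpos : ∃ σ, 0 < z σ)
    (hne : ∀ σ, 0 < z σ → σ.Nonempty) : ∑ i, weightedBarycenter z i = 1 := by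
  have hrow (σ : Finset V) : z σ * ∑ i, barycenter σ i = z σ := by
    rcases (hz σ).lt_or_eq with hσ | hσ
    · rw [sum_barycenter (hne σ hσ), mul_one]
    · simp [← hσ]
  obtain ⟨σ, hσ⟩ := hpos
  have hsum : 0 < ∑ σ, z σ := Finset.sum_pos' (fun τ _ => hz τ) ⟨σ, Finset.mem_univ _, hσ⟩
  simp_rw [weightedBarycenter_apply, ← Finset.mul_sum]
  rw [Finset.sum_comm]
  simp_rw [← Finset.mul_sum, hrow]
  exact inv_mul_cancel₀ hsum.ne'

theorem weightedBarycenter_eq_zero {z : Finset V → ℝ} (hz : 0 ≤ z) {i : V}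
    (h : ∀ σ, 0 < z σ → i ∉ σ) : weightedBarycenter z i = 0 := by
  rw [weightedBarycenter_apply]
  refine mul_eq_zero_of_right _ (Finset.sum_eq_zero fun σ _ => ?_)
  rcases (hz σ).lt_or_eq with hσ | hσ
  · simp [barycenter, h σ hσ]
  · simp [← hσ]

theorem weightedBarycenter_apply_le_apply {z : Finset V → ℝ} (hz : 0 ≤ z) {i j : V}
    (h : ∀ σ, 0 < z σ → i ∈ σ → j ∈ σ) : weightedBarycenter z i ≤ weightedBarycenter z j := by
  simp_rw [weightedBarycenter_apply]
  refine mul_le_mul_of_nonneg_left (Finset.sum_le_sum fun σ _ => ?_)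
    (inv_nonneg.mpr (Finset.sum_nonneg fun σ _ => hz σ))
  rcases (hz σ).lt_or_eq with hσ | hσ
  · by_cases hi : i ∈ σ
    · simp [barycenter, hi, h σ hσ hi]
    · simp only [barycenter, hi, if_false, mul_zero]
      exact mul_nonneg (hz σ) (barycenter_nonneg σ j)
  · simp [← hσ]

theorem continuousOn_weightedBarycenter :
    ContinuousOn weightedBarycenter {z : Finset V → ℝ | ∑ σ, z σ ≠ 0} := by
  refine continuousOn_pi.mpr fun i => ?_
  simp_rw [weightedBarycenter_apply]
  exact ContinuousOn.mul (ContinuousOn.inv₀ (by fun_prop) fun z hz => hz) (by fun_prop)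

end Barycenter

section FaceChains

variable {V : Type*} {Δ : Set (Finset V)}

variable (Δ) in
def faceChainRel (σ τ : Finset V) : Prop :=
  (σ ∈ Δ ∧ σ.Nonempty) ∧ (τ ∈ Δ ∧ τ.Nonempty) ∧ (σ ⊆ τ ∨ τ ⊆ σ)

instance : Std.Symm (faceChainRel Δ) := ⟨fun _ _ ⟨hσ, hτ, h⟩ => ⟨hτ, hσ, h.symm⟩⟩

theorem exists_forall_subset_of_mem_chainCone [Fintype V] {z : Finset V → ℝ}
    (hz : z ∈ chainCone (faceChainRel Δ)) : ∃ ρ, 0 < z ρ ∧ ∀ σ, 0 < z σ → σ ⊆ ρ := by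
  classical
  obtain ⟨a, ha⟩ := hz.2.1
  obtain ⟨ρ, hρ, hmax⟩ :=
    Finset.exists_max_image {σ | 0 < z σ} Finset.card ⟨a, by simpa using ha⟩
  simp only [Finset.mem_filter, Finset.mem_univ, true_and] at hρ hmax
  refine ⟨ρ, hρ, fun σ hσ => ?_⟩
  rcases (hz.2.2 σ ρ hσ hρ).2.2 with h | h
  · exact h
  · exact (Finset.eq_of_subset_of_card_le h (hmax σ hσ)).symm ▸ subset_rfl

variable [Fintype V] [DecidableEq V]

theorem subset_or_subset_of_levelGap_pos {τ ρ : Finset V} {x : V → ℝ} (hτ : 0 < levelGap τ x)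
    (hρ : 0 < levelGap ρ x) : τ ⊆ ρ ∨ ρ ⊆ τ := by
  by_contra! h
  obtain ⟨i, hiτ, hiρ⟩ := Finset.not_subset.mp h.1
  obtain ⟨j, hjρ, hjτ⟩ := Finset.not_subset.mp h.2
  have hij := ((levelGap_pos_iff.mp hτ).2 i hiτ).2 j hjτ
  have hji := ((levelGap_pos_iff.mp hρ).2 j hjρ).2 i hiρ
  exact hij.asymm hji

theorem levelGaps_mem_chainCone (hdown : ∀ σ ∈ Δ, ∀ τ ⊆ σ, τ ∈ Δ) {σ : Finset V} (hσ : σ ∈ Δ)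
    {x : V → ℝ} (hpos : ∃ i, 0 < x i) (hsupp : ∀ i, 0 < x i → i ∈ σ) :
    (levelGap · x) ∈ chainCone (faceChainRel Δ) := by
  have face {τ : Finset V} (hτ : 0 < levelGap τ x) : τ ∈ Δ ∧ τ.Nonempty :=
    have h := levelGap_pos_iff.mp hτ
    ⟨hdown σ hσ τ fun i hi => hsupp i (h.2 i hi).1, h.1⟩
  obtain ⟨i, hi⟩ := hpos
  refine ⟨fun τ => levelGap_nonneg τ x, ⟨({i | 0 < x i} : Finset V), levelGap_pos_iff.mpr ?_⟩,
    fun τ ρ hτ hρ => ⟨face hτ, face hρ, subset_or_subset_of_levelGap_pos hτ hρ⟩⟩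
  refine ⟨⟨i, by simpa using hi⟩, fun k hk => ?_⟩
  simp only [Finset.mem_filter, Finset.mem_univ, true_and] at hk ⊢
  exact ⟨hk, fun j hj => (not_lt.mp hj).trans_lt hk⟩

theorem subset_or_subset_of_levelGap_weightedBarycenter_pos {z : Finset V → ℝ}
    (hz : z ∈ chainCone (faceChainRel Δ)) {σ τ : Finset V} (hσ : 0 < z σ)
    (hτ : 0 < levelGap τ (weightedBarycenter z)) : σ ⊆ τ ∨ τ ⊆ σ := by
  by_contra! h
  obtain ⟨j, hjσ, hjτ⟩ := Finset.not_subset.mp h.1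
  obtain ⟨i, hiτ, hiσ⟩ := Finset.not_subset.mp h.2
  have hlt := ((levelGap_pos_iff.mp hτ).2 i hiτ).2 j hjτ
  -- every face of the chain containing `i` contains `j`, so `i` gets no more barycentric weight
  refine hlt.not_ge (weightedBarycenter_apply_le_apply hz.1 fun ρ hρ hiρ => ?_)
  rcases (hz.2.2 ρ σ hρ hσ).2.2 with hρσ | hσρ
  · exact absurd (hρσ hiρ) hiσ
  · exact hσρ hjσ

end FaceChains

theorem exists_pos_of_mem_stdSimplex {ι : Type*} [Fintype ι] {x : ι → ℝ}
    (hx : x ∈ stdSimplex ℝ ι) : ∃ i, 0 < x i := by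
  by_contra! h
  have : ∑ i, x i ≤ 0 := Finset.sum_nonpos fun i _ => h i
  linarith [hx.2]

section GeometricRealization

variable {n : ℕ} {Δ : Set (Finset (Fin n))}

theorem mem_convexHull_stdVert_iff {σ : Finset (Fin n)} {x : Fin n → ℝ} :
    x ∈ convexHull ℝ (stdVert n '' σ) ↔ x ∈ stdSimplex ℝ (Fin n) ∧ ∀ i ∉ σ, x i = 0 := by
  constructor
  · refine fun hx => convexHull_min (t := stdSimplex ℝ (Fin n) ∩ {x | ∀ i ∉ σ, x i = 0}) ?_
      ((convex_stdSimplex ℝ _).inter ?_) hx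
    · rintro _ ⟨i, hi, rfl⟩
      refine ⟨⟨fun j => ?_, by simp [stdVert]⟩, fun j hj => ?_⟩
      · unfold stdVert; split_ifs <;> norm_num
      · simp [stdVert, show j ≠ i by rintro rfl; exact hj hi]
    · simp only [Set.ofPred_forall]
      exact convex_iInter₂ fun i _ => convex_hyperplane (LinearMap.proj i).isLinear 0
  · rintro ⟨⟨hx0, hx1⟩, hxσ⟩
    have hsum : ∑ i ∈ σ, x i = 1 :=
      hx1 ▸ Finset.sum_subset (Finset.subset_univ σ) fun i _ hi => hxσ i hi
    convert Finset.centerMass_mem_convexHull σ (fun i _ => hx0 i) (hsum ▸ one_pos)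
      fun i hi => Set.mem_image_of_mem (stdVert n) hi
    funext j
    simp only [Finset.centerMass, hsum, inv_one, one_mul, Finset.sum_apply, Pi.smul_apply,
      smul_eq_mul, stdVert, mul_ite, mul_one, mul_zero, Finset.sum_ite_eq]
    split_ifs with hj
    · rfl
    · exact hxσ j hj

theorem mem_geomReal_iff {x : Fin n → ℝ} :
    x ∈ geomReal Δ ↔ ∃ σ ∈ Δ, σ.Nonempty ∧ x ∈ stdSimplex ℝ (Fin n) ∧ ∀ i ∉ σ, x i = 0 := by
  simp only [geomReal, Set.mem_iUnion, mem_convexHull_stdVert_iff, exists_prop]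

theorem convexHull_stdVert_subset_geomReal {σ : Finset (Fin n)} (hσ : σ ∈ Δ)
    (hne : σ.Nonempty) : convexHull ℝ (stdVert n '' σ) ⊆ geomReal Δ := fun x hx => by
  simp only [geomReal, Set.mem_iUnion]
  exact ⟨σ, hσ, hne, hx⟩

theorem weightedBarycenter_mem_convexHull {z : Finset (Fin n) → ℝ} (hz : 0 ≤ z)
    (hpos : ∃ σ, 0 < z σ) {ρ : Finset (Fin n)} (hsub : ∀ σ, 0 < z σ → σ.Nonempty ∧ σ ⊆ ρ) :
    weightedBarycenter z ∈ convexHull ℝ (stdVert n '' ρ) :=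
  mem_convexHull_stdVert_iff.mpr
    ⟨⟨weightedBarycenter_nonneg hz, sum_weightedBarycenter hz hpos fun σ hσ => (hsub σ hσ).1⟩,
      fun _ hi => weightedBarycenter_eq_zero hz fun σ hσ hiσ => hi ((hsub σ hσ).2 hiσ)⟩

theorem weightedBarycenter_mem_geomReal {z : Finset (Fin n) → ℝ}
    (hz : z ∈ chainCone (faceChainRel Δ)) : weightedBarycenter z ∈ geomReal Δ := by
  obtain ⟨ρ, hρ, hmax⟩ := exists_forall_subset_of_mem_chainCone hz
  obtain ⟨⟨hρΔ, hρne⟩, -⟩ := hz.2.2 ρ ρ hρ hρ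
  exact convexHull_stdVert_subset_geomReal hρΔ hρne <| weightedBarycenter_mem_convexHull hz.1
    hz.2.1 fun σ hσ => ⟨(hz.2.2 σ σ hσ hσ).1.2, hmax σ hσ⟩

theorem levelGaps_mem_chainCone_of_mem_geomReal (hdown : ∀ σ ∈ Δ, ∀ τ ⊆ σ, τ ∈ Δ)
    {x : Fin n → ℝ} (hx : x ∈ geomReal Δ) : (levelGap · x) ∈ chainCone (faceChainRel Δ) := by
  obtain ⟨σ, hσ, -, hxs, hxσ⟩ := mem_geomReal_iff.mp hx
  exact levelGaps_mem_chainCone hdown hσ (exists_pos_of_mem_stdSimplex hxs)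
    fun i hi => by_contra fun h => hi.ne' (hxσ i h)

theorem segment_weightedBarycenter_levelGaps_subset (hdown : ∀ σ ∈ Δ, ∀ τ ⊆ σ, τ ∈ Δ)
    {x : Fin n → ℝ} (hx : x ∈ geomReal Δ) :
    segment ℝ (weightedBarycenter (levelGap · x)) x ⊆ geomReal Δ := by
  obtain ⟨σ, hσ, -, hxs, hxσ⟩ := mem_geomReal_iff.mp hx
  obtain ⟨i, hi⟩ := exists_pos_of_mem_stdSimplex hxs
  set s : Finset (Fin n) := {i | 0 < x i}
  have hsσ : s ⊆ σ := fun j hj =>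
    by_contra fun h => (by simpa [s] using hj : 0 < x j).ne' (hxσ j h)
  have hQ := levelGaps_mem_chainCone_of_mem_geomReal hdown hx
  refine Set.Subset.trans ?_ (convexHull_stdVert_subset_geomReal (hdown σ hσ s hsσ)
    ⟨i, by simpa [s] using hi⟩)
  refine (convex_convexHull ℝ _).segment_subset
    (weightedBarycenter_mem_convexHull hQ.1 hQ.2.1 fun τ hτ => ?_)
    (mem_convexHull_stdVert_iff.mpr ⟨hxs, fun j hj => ?_⟩)
  · have h := levelGap_pos_iff.mp hτ
    exact ⟨h.1, fun j hj => by simpa [s] using (h.2 j hj).1⟩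
  · exact le_antisymm (by simpa [s] using hj) (hxs.1 j)

theorem nonempty_chainCone_homotopyEquiv_geomReal (hdown : ∀ σ ∈ Δ, ∀ τ ⊆ σ, τ ∈ Δ) :
    Nonempty (chainCone (faceChainRel Δ) ≃ₕ geomReal Δ) := by
  let toGeomReal : C(chainCone (faceChainRel Δ), geomReal Δ) :=
    ⟨fun z => ⟨_, weightedBarycenter_mem_geomReal z.2⟩,
      (continuousOn_weightedBarycenter.comp_continuous continuous_subtype_val
        fun z => (sum_pos_of_mem_chainCone z.2).ne').subtype_mk _⟩
  let toChainCone : C(geomReal Δ, chainCone (faceChainRel Δ)) :=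
    ⟨fun x => ⟨_, levelGaps_mem_chainCone_of_mem_geomReal hdown x.2⟩,
      (continuous_pi fun τ => (continuous_levelGap τ).comp continuous_subtype_val).subtype_mk _⟩
  refine ContinuousMap.nonempty_homotopyEquiv_of_segment_subset toGeomReal toChainCone
    (fun z => ?_) fun x => segment_weightedBarycenter_levelGaps_subset hdown x.2
  have hQ := levelGaps_mem_chainCone_of_mem_geomReal hdown (weightedBarycenter_mem_geomReal z.2)
  rw [segment_symm]
  refine segment_subset_chainCone z.2 hQ fun σ τ hσ hτ => ?_
  exact ⟨(z.2.2.2 σ σ hσ hσ).1, (hQ.2.2 τ τ hτ hτ).1,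
    subset_or_subset_of_levelGap_weightedBarycenter_pos z.2 hσ hτ⟩

end GeometricRealization

/-- Topological corollary: for every finite abstract simplicial complex `Δ` there
are `m ∈ ℕ` and a closed convex polyhedron `P ⊆ ℝ^m_{≥0}` (an intersection of
finitely many closed half-spaces with the nonnegative orthant) such that
`ℝ^m_{≥0} \ P` is homotopy equivalent to the geometric realization of `Δ`. -/
theorem orthant_minus_polyhedron_realizes {n : ℕ} (Δ : Set (Finset (Fin n)))
    (hdown : ∀ σ ∈ Δ, ∀ τ ⊆ σ, τ ∈ Δ) :
    ∃ (m : ℕ) (P : Set (Fin m → ℝ)),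
      (∃ (k : ℕ) (w : Fin k → Fin m → ℝ) (b : Fin k → ℝ),
        P = {y | (∀ a, 0 ≤ y a) ∧ ∀ l, ∑ a, w l a * y a ≤ b l}) ∧
      Nonempty ((↥({y : Fin m → ℝ | ∀ a, 0 ≤ y a} \ P)) ≃ₕ ↥(geomReal Δ)) := by
  let e := (Fintype.equivFin (Finset (Fin n))).symm
  obtain ⟨toChainCone⟩ :=
    nonempty_orthantDiffPolyhedron_homotopyEquiv_chainCone (R := faceChainRel Δ on e)
  obtain ⟨toGeomReal⟩ := nonempty_chainCone_homotopyEquiv_geomReal hdown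
  exact ⟨_, _, ⟨_, cliqueWeight (faceChainRel Δ on e), 0, rfl⟩,
    ⟨toChainCone.trans ((chainCone.homeomorphOnFun e _).toHomotopyEquiv.trans toGeomReal)⟩⟩
end

section
/- In the Grünbaum construction, distinct maximal faces of Δ give distinct vertices and the nerve recovers Δ on maximal faces: with Δ ⊆ 2^[n] having maximal faces α_1,...,α_k, and β_i = {α_j : i ∈ α_j} ∪ ({i} if i ∉ I(Δ)) for i ∈ [n], one has for every nonempty σ ⊆ [n]: ⋂_{i∈σ} β_i ≠ ∅ if and only if σ ∈ Δ. -/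
/-- Membership in Grünbaum's face `β_i ⊆ max(Δ) ⊔ [n]`: `β_i` contains the maximal
face `α_j` (encoded `Sum.inl j`) iff `i ∈ α_j`, and contains the original vertex
`v` (encoded `Sum.inr v`) iff `v = i` and `v` is not expressible as an
intersection of maximal faces (i.e. `v ∉ I(Δ)`). -/
def grunbaumMem {n k : ℕ} (α : Fin k → Finset (Fin n)) (i : Fin n) :
    Fin k ⊕ Fin n → Prop
  | Sum.inl j => i ∈ α j
  | Sum.inr v => v = i ∧
      ¬ ∃ σ : Finset (Fin k), {a : Fin n | ∀ l ∈ σ, a ∈ α l} = {v}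

theorem mem_iff_exists_subset_of_facets {ι V : Type*} {Δ : Set (Finset V)}
    (hdown : ∀ σ ∈ Δ, ∀ τ ⊆ σ, τ ∈ Δ) {α : ι → Finset V} (hα : ∀ j, α j ∈ Δ)
    (hcover : ∀ τ ∈ Δ, ∃ j, τ ⊆ α j) (σ : Finset V) :
    σ ∈ Δ ↔ ∃ j, σ ⊆ α j :=
  ⟨hcover σ, fun ⟨j, hj⟩ => hdown (α j) (hα j) σ hj⟩

theorem forall_grunbaumMem_inl_iff {n k : ℕ} (α : Fin k → Finset (Fin n))
    (σ : Finset (Fin n)) (j : Fin k) :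
    (∀ i ∈ σ, grunbaumMem α i (Sum.inl j)) ↔ σ ⊆ α j :=
  Iff.rfl

theorem eq_singleton_of_forall_grunbaumMem_inr {n k : ℕ} (α : Fin k → Finset (Fin n))
    {σ : Finset (Fin n)} (hσ : σ.Nonempty) {v : Fin n}
    (hv : ∀ i ∈ σ, grunbaumMem α i (Sum.inr v)) : σ = {v} :=
  Finset.eq_singleton_iff_nonempty_unique_mem.mpr ⟨hσ, fun i hi => (hv i hi).1.symm⟩

/-- In Grünbaum's construction, the nerve of the faces `β_i` recovers `Δ`:
for every nonempty `σ ⊆ [n]`, `⋂_{i∈σ} β_i ≠ ∅` iff `σ ∈ Δ`. -/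
theorem grunbaum_nerve_eq {n k : ℕ} (Δ : Set (Finset (Fin n)))
    (hdown : ∀ σ ∈ Δ, ∀ τ ⊆ σ, τ ∈ Δ) (hvert : ∀ v : Fin n, {v} ∈ Δ)
    (α : Fin k → Finset (Fin n))
    (hmaxfaces : ∀ j, α j ∈ Δ ∧ ∀ τ ∈ Δ, α j ⊆ τ → τ = α j)
    (hcover : ∀ τ ∈ Δ, ∃ j, τ ⊆ α j) :
    ∀ σ : Finset (Fin n), σ.Nonempty →
      ((∃ x : Fin k ⊕ Fin n, ∀ i ∈ σ, grunbaumMem α i x) ↔ σ ∈ Δ) := by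
  intro σ hσ
  have hfacets := mem_iff_exists_subset_of_facets hdown (fun j => (hmaxfaces j).1) hcover
  rw [hfacets]
  constructor
  · rintro ⟨j | v, hx⟩
    · exact ⟨j, (forall_grunbaumMem_inl_iff α σ j).mp hx⟩
    · rw [eq_singleton_of_forall_grunbaumMem_inr α hσ hx, ← hfacets]
      exact hvert v
  · rintro ⟨j, hj⟩
    exact ⟨Sum.inl j, (forall_grunbaumMem_inl_iff α σ j).mpr hj⟩
end
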